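/- arXiv:2605.10836 — 2 statements merged into one kernel-verified Lean document; each statement's English description precedes it below -/
import Mathlib

section
/- Let G be a graph with a leaf x (vertex of degree 1) whose unique neighbor is v. Then for every k ≥ 1, the number of non-forcing k-subsets satisfies z'(G;k) ≥ z'(G−x;k) + z'(G−{x,v};k−1). -/
open SimpleGraph

/-- The zero forcing closure: `ZFClosure G S v` means vertex `v` eventually becomes blue
when starting from the blue set `S` and repeatedly applying the color-change rule:
a blue vertex with exactly one white neighbor forces that neighbor to become blue. -/
inductive ZFClosure {V : Type*} (G : SimpleGraph V) (S : Set V) : V → Prop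
  | init {v : V} : v ∈ S → ZFClosure G S v
  | force {u w : V} : ZFClosure G S u → G.Adj u w →
      (∀ x, G.Adj u x → x ≠ w → ZFClosure G S x) → ZFClosure G S w

/-- `S` is a zero forcing set of `G` if its closure is all of `V`. -/
def IsZeroForcing {V : Type*} (G : SimpleGraph V) (S : Set V) : Prop :=
  ∀ v, ZFClosure G S v

/-- `z(G;k)`: the number of zero forcing sets of size `k`. -/
noncomputable def zfCount {V : Type*} (G : SimpleGraph V) [Fintype V] (k : ℕ) : ℕ :=
  Nat.card {S : Finset V // S.card = k ∧ IsZeroForcing G ↑S}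

/-- `z'(G;k)`: the number of non-forcing `k`-subsets. -/
noncomputable def nfCount {V : Type*} (G : SimpleGraph V) [Fintype V] (k : ℕ) : ℕ :=
  Nat.card {S : Finset V // S.card = k ∧ ¬ IsZeroForcing G ↑S}

/-- A fort: every vertex outside `F` has `0` or at least `2` neighbors in `F`. -/
def IsFort {V : Type*} (G : SimpleGraph V) (F : Set V) : Prop :=
  ∀ v ∉ F, (∀ w ∈ F, ¬ G.Adj v w) ∨
    ∃ w₁ ∈ F, ∃ w₂ ∈ F, w₁ ≠ w₂ ∧ G.Adj v w₁ ∧ G.Adj v w₂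

/-- True twins: adjacent with the same neighbors outside the pair. -/
def TrueTwins {V : Type*} (G : SimpleGraph V) (u v : V) : Prop :=
  G.Adj u v ∧ ∀ w, w ≠ u → w ≠ v → (G.Adj u w ↔ G.Adj v w)

/-- False twins: distinct, nonadjacent, with the same open neighborhoods. -/
def FalseTwins {V : Type*} (G : SimpleGraph V) (u v : V) : Prop :=
  u ≠ v ∧ ¬ G.Adj u v ∧ ∀ w, G.Adj u w ↔ G.Adj v w

/-- A twin pair: true twins or false twins. -/
def TwinPair {V : Type*} (G : SimpleGraph V) (u v : V) : Prop :=
  TrueTwins G u v ∨ FalseTwins G u v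

/-- `G` is path-extremal: the path on the same number of vertices has
coefficientwise at least as many zero forcing sets of every size. -/
noncomputable def PathExtremal {V : Type*} (G : SimpleGraph V) [Fintype V] : Prop :=
  ∀ k : ℕ, zfCount G k ≤ zfCount (SimpleGraph.pathGraph (Fintype.card V)) k

/-!
A set fails to force exactly when it misses some nonempty fort (the vertices that stay white
form one), and a fort of `G - x` or of `G - {x, v}` becomes a fort of `G`, possibly after
adding the leaf `x`. Hence every non-forcing `k`-set of `G - x` is non-forcing in `G`. A
non-forcing `(k-1)`-set `T` of `G - {x, v}` is sent to `T ∪ {x}` if that does not force `G`,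
and otherwise to `T ∪ {v}`, which never forces `G`. These images are new: `T ∪ {x}` contains
`x`, and if `T ∪ {x}` forces `G` then so does `T ∪ {x, v}`, whence `T ∪ {v}` forces `G - x`,
because a leaf whose neighbour is blue plays no role in forcing.
-/

section ZeroForcing

variable {V : Type*} {G : SimpleGraph V}

theorem isFort_iff_forall_not_existsUnique {F : Set V} :
    IsFort G F ↔ ∀ u ∉ F, ¬ ∃! w, w ∈ F ∧ G.Adj u w := by
  refine forall₂_congr fun u _ => ⟨?_, fun h => ?_⟩
  · rintro (h | ⟨w₁, h₁, w₂, h₂, hne, a₁, a₂⟩) ⟨w, ⟨hw, a⟩, huniq⟩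
    · exact h w hw a
    · exact hne ((huniq w₁ ⟨h₁, a₁⟩).trans (huniq w₂ ⟨h₂, a₂⟩).symm)
  · by_contra! hc
    obtain ⟨w, hw, a⟩ := hc.1
    exact h ⟨w, ⟨hw, a⟩, fun y ⟨hy, ay⟩ => by_contra fun hne => hc.2 y hy w hw hne ay a⟩

theorem ZFClosure.mono {S T : Set V} (hST : S ⊆ T) {w : V} (hw : ZFClosure G S w) :
    ZFClosure G T w := by
  induction hw with
  | init hw => exact .init (hST hw)
  | force _ hadj _ ihu ihall => exact .force ihu hadj ihall

theorem IsZeroForcing.mono {S T : Set V} (hS : IsZeroForcing G S) (hST : S ⊆ T) :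
    IsZeroForcing G T :=
  fun w => (hS w).mono hST

theorem ZFClosure.notMem_of_isFort {S F : Set V} (hF : IsFort G F) (hFS : Disjoint F S) {w : V}
    (hw : ZFClosure G S w) : w ∉ F := by
  induction hw with
  | init hw => exact fun hwF => hFS.notMem_of_mem_left hwF hw
  | @force u w _ hadj _ ihu ihall =>
    intro hwF
    exact isFort_iff_forall_not_existsUnique.1 hF u ihu
      ⟨w, ⟨hwF, hadj⟩, fun y ⟨hyF, hy⟩ => by_contra fun hne => ihall y hy hne hyF⟩

theorem isFort_setOf_not_zfClosure (S : Set V) : IsFort G {w | ¬ ZFClosure G S w} := by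
  refine isFort_iff_forall_not_existsUnique.2 fun u hu ⟨w, ⟨hw, hadj⟩, huniq⟩ =>
    hw (.force (not_not.1 hu) hadj fun y hy hne => by_contra fun hyc => hne (huniq y ⟨hyc, hy⟩))

theorem not_isZeroForcing_iff_exists_isFort {S : Set V} :
    ¬ IsZeroForcing G S ↔ ∃ F, IsFort G F ∧ F.Nonempty ∧ Disjoint F S := by
  refine ⟨fun h => ?_, fun ⟨F, hF, ⟨w, hw⟩, hFS⟩ hS => (hS w).notMem_of_isFort hF hFS hw⟩
  obtain ⟨w, hw⟩ := not_forall.1 h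
  exact ⟨_, isFort_setOf_not_zfClosure S, ⟨w, hw⟩,
    Set.disjoint_left.2 fun a ha haS => ha (.init haS)⟩

theorem IsFort.not_existsUnique_image_val {s : Set V} {F : Set s} (hF : IsFort (G.induce s) F)
    {u : V} (hu : u ∈ s) (huF : u ∉ Subtype.val '' F) :
    ¬ ∃! w, w ∈ Subtype.val '' F ∧ G.Adj u w := by
  rintro ⟨_, ⟨⟨f, hf, rfl⟩, hadj⟩, huniq⟩
  exact isFort_iff_forall_not_existsUnique.1 hF ⟨u, hu⟩ (fun h => huF ⟨_, h, rfl⟩)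
    ⟨f, ⟨hf, hadj⟩, fun g ⟨hg, hg'⟩ => Subtype.ext (huniq g ⟨⟨g, hg, rfl⟩, hg'⟩)⟩

theorem existsUnique_of_insert_of_not_adj {A : Set V} {u x : V} (hux : ¬ G.Adj u x)
    (h : ∃! w, w ∈ insert x A ∧ G.Adj u w) : ∃! w, w ∈ A ∧ G.Adj u w := by
  obtain ⟨w, ⟨hw, hadj⟩, huniq⟩ := h
  have hwA : w ∈ A := hw.resolve_left (by rintro rfl; exact hux hadj)
  exact ⟨w, ⟨hwA, hadj⟩, fun y ⟨hy, hy'⟩ => huniq y ⟨Or.inr hy, hy'⟩⟩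

end ZeroForcing

section Leaf

variable {V : Type*} {G : SimpleGraph V} {x v : V}

theorem IsZeroForcing.induce_of_isLeaf (huniq : ∀ w, G.Adj x w → w = v)
    {s : Set V} (hs : ∀ w, w ∈ s ↔ w ≠ x) {S : Set V} (hS : IsZeroForcing G S)
    (hxv : x ∈ S → v ∈ S) : IsZeroForcing (G.induce s) (Subtype.val ⁻¹' S) := by
  by_contra h
  obtain ⟨F, hF, hFne, hFS⟩ := not_isZeroForcing_iff_exists_isFort.1 h
  rw [← Set.disjoint_image_left] at hFS
  refine not_isZeroForcing_iff_exists_isFort.2 ?_ hS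
  by_cases hv : v ∈ Subtype.val '' F
  · -- `x` would force `v`, so `x` joins the fort
    refine ⟨insert x (Subtype.val '' F), isFort_iff_forall_not_existsUnique.2 fun u hu => ?_,
      Set.insert_nonempty _ _,
      Set.disjoint_insert_left.2 ⟨fun hx => hFS.notMem_of_mem_left hv (hxv hx), hFS⟩⟩
    have hux : u ≠ x := fun h => hu (.inl h)
    have huv : u ≠ v := fun h => hu (.inr (h ▸ hv))
    exact fun h => hF.not_existsUnique_image_val ((hs u).2 hux) (fun h => hu (.inr h))
      (existsUnique_of_insert_of_not_adj (fun h => huv (huniq u h.symm)) h)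
  · refine ⟨Subtype.val '' F, isFort_iff_forall_not_existsUnique.2 fun u hu => ?_,
      hFne.image _, hFS⟩
    by_cases hux : u = x
    · rintro ⟨w, ⟨hw, hadj'⟩, -⟩
      exact hv (huniq w (hux ▸ hadj') ▸ hw)
    · exact hF.not_existsUnique_image_val ((hs u).2 hux) hu

theorem not_isZeroForcing_insert_of_isLeaf (hadj : G.Adj x v) (huniq : ∀ w, G.Adj x w → w = v)
    {s : Set V} (hs : ∀ w, w ∈ s ↔ w ≠ x ∧ w ≠ v) {S : Set V} (hxS : x ∉ S)
    (hS : ¬ IsZeroForcing (G.induce s) (Subtype.val ⁻¹' S)) : ¬ IsZeroForcing G (insert v S) := by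
  obtain ⟨F, hF, hFne, hFS⟩ := not_isZeroForcing_iff_exists_isFort.1 hS
  rw [← Set.disjoint_image_left] at hFS
  have hmem : ∀ w ∈ Subtype.val '' F, w ≠ x ∧ w ≠ v := by
    rintro _ ⟨f, -, rfl⟩
    exact (hs f).1 f.2
  have hFvS : Disjoint (Subtype.val '' F) (insert v S) :=
    Set.disjoint_insert_right.2 ⟨fun hv => (hmem v hv).2 rfl, hFS⟩
  refine not_isZeroForcing_iff_exists_isFort.2 ?_
  by_cases hv : ∃ f ∈ Subtype.val '' F, G.Adj v f
  · -- adding `x` gives `v` a second neighbour in the fort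
    obtain ⟨f, hf, hvf⟩ := hv
    refine ⟨insert x (Subtype.val '' F), isFort_iff_forall_not_existsUnique.2 fun u hu => ?_,
      Set.insert_nonempty _ _, Set.disjoint_insert_left.2 ⟨?_, hFvS⟩⟩
    · have hux : u ≠ x := fun h => hu (.inl h)
      by_cases huv : u = v
      · rintro ⟨w, -, huniq'⟩
        subst huv
        exact (hmem f hf).1
          ((huniq' f ⟨.inr hf, hvf⟩).trans (huniq' x ⟨.inl rfl, hadj.symm⟩).symm)
      · exact fun h => hF.not_existsUnique_image_val ((hs u).2 ⟨hux, huv⟩)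
          (fun h => hu (.inr h)) (existsUnique_of_insert_of_not_adj (huv ∘ huniq u ∘ .symm) h)
    · rintro (h | h)
      exacts [hadj.ne h, hxS h]
  · refine ⟨Subtype.val '' F, isFort_iff_forall_not_existsUnique.2 fun u hu => ?_,
      hFne.image _, hFvS⟩
    by_cases hux : u = x
    · rintro ⟨w, ⟨hw, huw⟩, -⟩
      exact (hmem w hw).2 (huniq w (hux ▸ huw))
    by_cases huv : u = v
    · rintro ⟨w, ⟨hw, huw⟩, -⟩
      exact hv ⟨w, hw, huv ▸ huw⟩
    exact hF.not_existsUnique_image_val ((hs u).2 ⟨hux, huv⟩) hu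

end Leaf

open Finset

section Counting

variable {V : Type*}

open Classical in
theorem nfCount_eq_card_filter [Fintype V] (G : SimpleGraph V) (k : ℕ) :
    nfCount G k = #{S : Finset V | S.card = k ∧ ¬ IsZeroForcing G ↑S} := by
  rw [nfCount, Nat.card_eq_fintype_card, Fintype.card_subtype]

open Classical in
theorem nfCount_induce_eq_card_filter (G : SimpleGraph V) (t : Finset V)
    [Fintype (t : Set V)] (k : ℕ) :
    nfCount (G.induce (t : Set V)) k =
      #((t.powersetCard k).filter fun S : Finset V =>
        ¬ IsZeroForcing (G.induce t) (Subtype.val ⁻¹' ↑S)) := by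
  rw [nfCount, Nat.card_eq_fintype_card, Fintype.card_subtype]
  have hval (S : Finset (t : Set V)) :
      Subtype.val ⁻¹' (↑(S.map (Function.Embedding.subtype _)) : Set V) =
        (S : Set (t : Set V)) := by
    rw [coe_map, Function.Embedding.coe_subtype, Set.preimage_image_eq _ Subtype.val_injective]
  have hsub (S : Finset (t : Set V)) : S.map (Function.Embedding.subtype _) ⊆ t :=
    fun _ ha => mem_coe.1 (map_subtype_subset S (mem_coe.2 ha))
  have hmap {S : Finset V} (hS : S ⊆ t) :
      (S.subtype (· ∈ (t : Set V))).map (Function.Embedding.subtype _) = S :=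
    subtype_map_of_mem fun _ ha => hS ha
  refine card_nbij'
    (fun S : Finset (t : Set V) => (S.map (Function.Embedding.subtype _) : Finset V))
    (fun S : Finset V => S.subtype (· ∈ (t : Set V))) (fun S hS => ?_) (fun S hS => ?_)
    (fun S _ => map_injective (Function.Embedding.subtype _) (hmap (hsub S)))
    (fun S hS => hmap (mem_powersetCard.1 (mem_filter.1 hS).1).1)
  · simp only [mem_coe, mem_filter, mem_univ, true_and] at hS ⊢
    rw [mem_powersetCard, card_map, hval]
    exact ⟨⟨hsub S, hS.1⟩, hS.2⟩
  · simp only [mem_coe, mem_filter, mem_powersetCard, mem_univ, true_and] at hS ⊢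
    rw [← hval, hmap hS.1.1, ← card_map (Function.Embedding.subtype _), hmap hS.1.1]
    exact ⟨hS.1.2, hS.2⟩

end Counting

section LeafExtension

variable {V : Type*} [DecidableEq V] {G : SimpleGraph V} {x v : V}

open Classical in
noncomputable def leafExtension (G : SimpleGraph V) (x v : V) (T : Finset V) : Finset V :=
  if IsZeroForcing G ↑(insert x T) then insert v T else insert x T

theorem card_leafExtension {T : Finset V} (hx : x ∉ T) (hv : v ∉ T) :
    #(leafExtension G x v T) = #T + 1 := by
  unfold leafExtension
  split_ifs
  exacts [card_insert_of_notMem hv, card_insert_of_notMem hx]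

theorem leafExtension_injOn (hxv : x ≠ v) :
    Set.InjOn (leafExtension G x v) {T | x ∉ T ∧ v ∉ T} := by
  rintro T₁ ⟨hx₁, hv₁⟩ T₂ ⟨hx₂, hv₂⟩ h
  unfold leafExtension at h
  split_ifs at h
  · rw [← erase_insert hv₁, h, erase_insert hv₂]
  · exact absurd (h ▸ mem_insert_self x T₂) (by simp [hxv, hx₁])
  · exact absurd (h ▸ mem_insert_self x T₁) (by simp [hxv, hx₂])
  · rw [← erase_insert hx₁, h, erase_insert hx₂]

theorem not_isZeroForcing_leafExtension (hadj : G.Adj x v) (huniq : ∀ w, G.Adj x w → w = v)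
    {s : Set V} (hs : ∀ w, w ∈ s ↔ w ≠ x ∧ w ≠ v) {T : Finset V} (hx : x ∉ T)
    (hT : ¬ IsZeroForcing (G.induce s) (Subtype.val ⁻¹' ↑T)) :
    ¬ IsZeroForcing G ↑(leafExtension G x v T) := by
  unfold leafExtension
  split_ifs with h
  · rw [coe_insert]
    exact not_isZeroForcing_insert_of_isLeaf hadj huniq hs hx hT
  · exact h

theorem leafExtension_ne (huniq : ∀ w, G.Adj x w → w = v) {s : Set V}
    (hs : ∀ w, w ∈ s ↔ w ≠ x) {S : Finset V} (hx : x ∉ S)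
    (hS : ¬ IsZeroForcing (G.induce s) (Subtype.val ⁻¹' ↑S))
    (T : Finset V) : leafExtension G x v T ≠ S := by
  unfold leafExtension
  split_ifs with h
  · rintro rfl
    have hxvT : IsZeroForcing G ↑(insert x (insert v T)) :=
      h.mono (coe_subset.2 (insert_subset_insert _ (subset_insert _ _)))
    refine hS ((hxvT.induce_of_isLeaf huniq hs fun _ => ?_).mono fun w hw => ?_)
    · simp
    · exact (mem_insert.1 hw).resolve_left ((hs w).1 w.2)
  · rintro rfl
    exact hx (mem_insert_self x T)

end LeafExtension

/-- Leaf recurrence: if `x` is a leaf of `G` with unique neighbor `v`, then for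
every `k ≥ 1`, `z'(G;k) ≥ z'(G-x;k) + z'(G-{x,v};k-1)`. -/
theorem stmt_3 {V : Type*} [Fintype V] [DecidableEq V] (G : SimpleGraph V) (x v : V)
    (hadj : G.Adj x v) (huniq : ∀ w, G.Adj x w → w = v) (k : ℕ) (hk : 1 ≤ k) :
    nfCount (G.induce ((Finset.univ.erase x : Finset V) : Set V)) k +
      nfCount (G.induce (((Finset.univ.erase x).erase v : Finset V) : Set V)) (k - 1) ≤
      nfCount G k := by
  classical
  have hs₁ : ∀ w, w ∈ ((univ.erase x : Finset V) : Set V) ↔ w ≠ x := by simp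
  have hs₂ : ∀ w, w ∈ (((univ.erase x).erase v : Finset V) : Set V) ↔ w ≠ x ∧ w ≠ v := by simp
  have hxv {T : Finset V} (hT : T ⊆ (univ.erase x).erase v) : x ∉ T ∧ v ∉ T :=
    ⟨fun h => ((hs₂ x).1 (hT h)).1 rfl, fun h => ((hs₂ v).1 (hT h)).2 rfl⟩
  rw [nfCount_induce_eq_card_filter, nfCount_induce_eq_card_filter, nfCount_eq_card_filter,
    ← card_image_of_injOn ((leafExtension_injOn (G := G) hadj.ne).mono
      fun T hT => hxv (mem_powersetCard.1 (mem_filter.1 hT).1).1),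
    ← card_union_of_disjoint]
  · refine card_le_card (union_subset (fun S hS => ?_) fun S hS => ?_) <;>
      simp only [mem_filter, mem_powersetCard, mem_image, mem_univ, true_and] at hS ⊢
    · have hx : x ∉ S := fun h => (hs₁ x).1 (hS.1.1 h) rfl
      exact ⟨hS.1.2, fun h => hS.2 (h.induce_of_isLeaf huniq hs₁ fun h' => absurd h' hx)⟩
    · obtain ⟨T, ⟨⟨hT, hTk⟩, hTnf⟩, rfl⟩ := hS
      obtain ⟨hx, hv⟩ := hxv hT
      refine ⟨?_, not_isZeroForcing_leafExtension hadj huniq hs₂ hx hTnf⟩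
      rw [card_leafExtension hx hv]
      omega
  · rw [disjoint_right]
    simp only [mem_image, mem_filter, mem_powersetCard]
    rintro _ ⟨T, -, rfl⟩ ⟨⟨hS, -⟩, hSnf⟩
    exact leafExtension_ne huniq hs₁ (fun h => (hs₁ x).1 (hS h) rfl) hSnf T rfl
end

section
/- Let G be a graph on n ≥ 3 vertices that contains a leaf x with unique neighbor v, and suppose that both G−x and G−{x,v} are path-extremal. Then G is path-extremal. -/
open SimpleGraph

/-!
Call a `k`-set non-forcing if it is not a zero forcing set. Zero forcing and non-forcing `k`-sets
together are all `C(|V|, k)` of them, so `G` is path-extremal iff `z'(G;k) ≥ z'(P_n;k)` for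
all `k`.

On a path `P_m` a set is non-forcing exactly when it consists of interior vertices, no two of them
consecutive. Splitting such sets according to whether they contain the second-to-last vertex
gives `z'(P_{m+2};k+1) ≤ z'(P_{m+1};k+1) + z'(P_m;k)`.

For the leaf `x` with neighbour `v`, non-forcing sets of `G - x` stay non-forcing in `G`. A
non-forcing set `T` of `G - {x,v}` is sent to `T ∪ {x}` if that does not force `G`, and to
`T ∪ {v}` otherwise; in that case `T ∪ {v}` is still non-forcing in `G`, but it forces `G - x`,
so it is not the image of a set of the first kind. Hence
`z'(G;k+1) ≥ z'(G-x;k+1) + z'(G-{x,v};k)`, and the hypotheses chain the two recurrences together.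
-/

theorem not_zfClosure_empty {W : Type*} (H : SimpleGraph W) (w : W) : ¬ ZFClosure H ∅ w := by
  intro hw
  induction hw with
  | init h => exact h
  | force _ _ _ ih => exact ih

section Counting

variable {W : Type*} [Fintype W]

theorem zfCount_add_nfCount (H : SimpleGraph W) (k : ℕ) :
    zfCount H k + nfCount H k = (Fintype.card W).choose k := by
  classical
  simp only [zfCount, nfCount, Nat.card_eq_fintype_card, Fintype.card_subtype]
  rw [← Finset.filter_filter, ← Finset.filter_filter, Finset.card_filter_add_card_filter_not,
    ← Fintype.card_subtype, Fintype.card_finset_len]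

theorem pathExtremal_iff_nfCount_le (H : SimpleGraph W) :
    PathExtremal H ↔ ∀ k, nfCount (pathGraph (Fintype.card W)) k ≤ nfCount H k := by
  refine forall_congr' fun k => ?_
  have hH := zfCount_add_nfCount H k
  have hP := zfCount_add_nfCount (pathGraph (Fintype.card W)) k
  rw [Fintype.card_fin] at hP
  omega

theorem nfCount_zero [Nonempty W] (H : SimpleGraph W) : nfCount H 0 = 1 := by
  refine Nat.card_eq_one_iff_exists.2 ⟨⟨∅, Finset.card_empty, fun h => ?_⟩, fun S => ?_⟩
  · exact not_zfClosure_empty H (Classical.arbitrary W) (by simpa using h _)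
  · exact Subtype.ext (Finset.card_eq_zero.1 S.2.1)

end Counting

theorem nfCount_induce_congr {V : Type*} {G : SimpleGraph V} {s t : Set V} [Fintype s]
    [Fintype t] (h : s = t) (k : ℕ) : nfCount (G.induce s) k = nfCount (G.induce t) k := by
  subst h
  rfl

section Path

variable {m : ℕ}

/-- Vacuous for `j ≥ m`, so that the propagation lemmas below may run off the end of the path. -/
def InPathClosure (S : Set (Fin m)) (j : ℕ) : Prop :=
  ∀ h : j < m, ZFClosure (pathGraph m) S ⟨j, h⟩

namespace InPathClosure

variable {S : Set (Fin m)} {j : ℕ}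

theorem of_mem {i : Fin m} (hi : i ∈ S) : InPathClosure S i :=
  fun _ => ZFClosure.init hi

theorem succ (hj : InPathClosure S j) (hprev : 0 < j → InPathClosure S (j - 1)) :
    InPathClosure S (j + 1) := by
  intro h
  refine ZFClosure.force (hj (by omega)) (pathGraph_adj.2 (Or.inl rfl)) fun y hy hyw => ?_
  have hyw' : y.val ≠ j + 1 := fun e => hyw (Fin.ext e)
  have hyj : y.val + 1 = j := by have := pathGraph_adj.1 hy; simp only at this; omega
  have := hprev (by omega)
  rw [show j - 1 = y.val by omega] at this
  exact this y.isLt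

theorem of_succ (hj : j + 1 < m) (h1 : InPathClosure S (j + 1)) (h2 : InPathClosure S (j + 2)) :
    InPathClosure S j := by
  intro h
  refine ZFClosure.force (h1 hj) (pathGraph_adj.2 (Or.inr rfl)) fun y hy hyw => ?_
  have hyw' : y.val ≠ j := fun e => hyw (Fin.ext e)
  have hyj : y.val = j + 2 := by have := pathGraph_adj.1 hy; simp only at this; omega
  rw [← hyj] at h2
  exact h2 y.isLt

end InPathClosure

theorem isZeroForcing_pathGraph_of_inPathClosure {S : Set (Fin m)} {i : ℕ} (hi : i < m)
    (h0 : InPathClosure S i) (h1 : InPathClosure S (i + 1)) : IsZeroForcing (pathGraph m) S := by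
  have up : ∀ d, InPathClosure S (i + d) ∧ InPathClosure S (i + d + 1) := by
    intro d
    induction d with
    | zero => exact ⟨h0, h1⟩
    | succ d ih => exact ⟨ih.2, ih.2.succ fun _ => by simpa using ih.1⟩
  have down : ∀ d ≤ i, InPathClosure S (i - d) ∧ InPathClosure S (i - d + 1) := by
    intro d
    induction d with
    | zero => exact fun _ => ⟨h0, h1⟩
    | succ d ih =>
      intro hd
      obtain ⟨hd0, hd1⟩ := ih (by omega)
      rw [show i - d = i - (d + 1) + 1 by omega] at hd0 hd1
      exact ⟨.of_succ (by omega) hd0 hd1, hd0⟩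
  intro w
  rcases le_total i w with hw | hw
  · have := (up (w - i)).1
    rw [Nat.add_sub_cancel' hw] at this
    exact this w.isLt
  · have := (down (i - w) (Nat.sub_le _ _)).1
    rw [Nat.sub_sub_self hw] at this
    exact this w.isLt

/-- Non-forcing sets of `pathGraph m`, read as sets of indices in `ℕ` so that paths of different
lengths can be compared without casts between `Fin` types. -/
def PathStalled (m : ℕ) (T : Finset ℕ) : Prop :=
  ∀ i ∈ T, 0 < i ∧ i + 2 ≤ m ∧ i + 1 ∉ T

instance (T : Finset ℕ) : Decidable (PathStalled m T) :=
  inferInstanceAs (Decidable (∀ i ∈ T, _))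

theorem mem_of_zfClosure_pathGraph {S : Finset (Fin m)}
    (hS : PathStalled m (S.map Fin.valEmbedding)) {w : Fin m}
    (hw : ZFClosure (pathGraph m) S w) : w ∈ S := by
  induction hw with
  | init h => exact h
  | @force u w _ huw _ hu hnb =>
    exfalso
    have memT : ∀ {i : Fin m}, i ∈ S → i.val ∈ S.map Fin.valEmbedding :=
      Finset.mem_map_of_mem Fin.valEmbedding
    obtain ⟨hu0, hum, hu1⟩ := hS u (memT hu)
    rcases pathGraph_adj.1 huw with h | h
    · have hy := hnb ⟨u - 1, by omega⟩ (pathGraph_adj.2 (Or.inr (by simp only; omega)))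
        fun e => by have := congrArg Fin.val e; simp only at this; omega
      have hu' := memT hu
      rw [show u.val = u.val - 1 + 1 by omega] at hu'
      exact (hS _ (memT hy)).2.2 hu'
    · have hy := hnb ⟨u + 1, by omega⟩ (pathGraph_adj.2 (Or.inl rfl))
        fun e => by have := congrArg Fin.val e; simp only at this; omega
      exact hu1 (memT hy)

theorem isZeroForcing_pathGraph_iff (hm : 0 < m) (S : Finset (Fin m)) :
    IsZeroForcing (pathGraph m) S ↔ ¬ PathStalled m (S.map Fin.valEmbedding) := by
  constructor
  · intro hS hst
    have h0 := mem_of_zfClosure_pathGraph hst (hS ⟨0, hm⟩)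
    exact (hst 0 (Finset.mem_map_of_mem _ h0)).1.false
  · intro hst
    simp only [PathStalled, not_forall] at hst
    obtain ⟨_, hiT, hi⟩ := hst
    obtain ⟨a, ha, rfl⟩ := Finset.mem_map.1 hiT
    have h0 : InPathClosure (S : Set (Fin m)) a := .of_mem ha
    refine isZeroForcing_pathGraph_of_inPathClosure a.isLt h0 ?_
    by_cases ha0 : a.val = 0
    · exact h0.succ (by omega)
    by_cases ham : a.val + 2 ≤ m
    · obtain ⟨b, hb, hba⟩ := Finset.mem_map.1 (show a.val + 1 ∈ S.map Fin.valEmbedding by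
        simp only [Fin.valEmbedding_apply, not_and, not_not] at hi
        exact hi (by omega) ham)
      rw [← hba]
      exact .of_mem hb
    · exact fun h => absurd h (by omega)

def pathStalledSets (m k : ℕ) : Finset (Finset ℕ) :=
  ((Finset.range m).powersetCard k).filter (PathStalled m)

-- For `m = 0` the empty set forces the empty path, while `∅` is stalled.
theorem nfCount_pathGraph (hm : 0 < m) (k : ℕ) :
    nfCount (pathGraph m) k = (pathStalledSets m k).card := by
  classical
  rw [nfCount, Nat.card_eq_fintype_card, Fintype.card_subtype,
    ← Finset.card_map (Finset.mapEmbedding Fin.valEmbedding).toEmbedding]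
  congr 1
  ext T
  simp only [isZeroForcing_pathGraph_iff hm, not_not, Finset.mem_map, Finset.mem_filter,
    Finset.mem_univ, true_and, RelEmbedding.coe_toEmbedding, Finset.mapEmbedding_apply,
    pathStalledSets, Finset.mem_powersetCard]
  constructor
  · rintro ⟨S, ⟨hk, hS⟩, rfl⟩
    refine ⟨⟨fun i hi => ?_, by rwa [Finset.card_map]⟩, hS⟩
    obtain ⟨a, -, rfl⟩ := Finset.mem_map.1 hi
    exact Finset.mem_range.2 a.isLt
  · rintro ⟨⟨hT, hk⟩, hS⟩
    refine ⟨T.attachFin fun i hi => Finset.mem_range.1 (hT hi), ?_,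
      Finset.map_valEmbedding_attachFin _⟩
    rw [Finset.map_valEmbedding_attachFin, Finset.card_attachFin]
    exact ⟨hk, hS⟩

theorem card_pathStalledSets_add_two_le (m k : ℕ) :
    (pathStalledSets (m + 2) (k + 1)).card ≤
      (pathStalledSets (m + 1) (k + 1)).card + (pathStalledSets m k).card := by
  rw [← Finset.card_filter_add_card_filter_not (fun T => m ∉ T)]
  simp only [not_not]
  refine add_le_add (Finset.card_le_card fun T hT => ?_) ?_
  · simp only [pathStalledSets, Finset.mem_filter, Finset.mem_powersetCard] at hT ⊢
    obtain ⟨⟨⟨-, hk⟩, hS⟩, hmT⟩ := hT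
    have hlt : ∀ i ∈ T, i < m := fun i hi => by
      have := (hS i hi).2.1
      have : i ≠ m := fun e => hmT (e ▸ hi)
      omega
    exact ⟨⟨fun i hi => Finset.mem_range.2 (by have := hlt i hi; omega), hk⟩,
      fun i hi => ⟨(hS i hi).1, by have := hlt i hi; omega, (hS i hi).2.2⟩⟩
  · refine Finset.card_le_card_of_injOn (fun T => T.erase m) (fun T hT => ?_)
      ((Finset.erase_injOn' m).mono fun T hT => (Finset.mem_filter.1 hT).2)
    simp only [pathStalledSets, Finset.coe_filter, Finset.mem_powersetCard, Set.mem_ofPred_eq,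
      Finset.mem_filter] at hT ⊢
    obtain ⟨⟨⟨-, hk⟩, hS⟩, hmT⟩ := hT
    have hle : ∀ i ∈ T.erase m, i + 2 ≤ m := fun i hi => by
      obtain ⟨him, hi⟩ := Finset.mem_erase.1 hi
      have := (hS i hi).2
      have : i + 1 ≠ m := fun e => this.2 (e ▸ hmT)
      omega
    refine ⟨⟨fun i hi => Finset.mem_range.2 (by have := hle i hi; omega), ?_⟩,
      fun i hi => ?_⟩
    · rw [Finset.card_erase_of_mem hmT, hk, Nat.add_sub_cancel]
    · exact ⟨(hS i (Finset.mem_of_mem_erase hi)).1, hle i hi,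
        fun h => (hS i (Finset.mem_of_mem_erase hi)).2.2 (Finset.mem_of_mem_erase h)⟩

theorem nfCount_pathGraph_add_two_le (hm : 0 < m) (k : ℕ) :
    nfCount (pathGraph (m + 2)) (k + 1) ≤
      nfCount (pathGraph (m + 1)) (k + 1) + nfCount (pathGraph m) k := by
  simp only [nfCount_pathGraph hm, nfCount_pathGraph (Nat.succ_pos _)]
  exact card_pathStalledSets_add_two_le m k

end Path

section Leaf

variable {V : Type*} {G : SimpleGraph V} {x v : V}

theorem mem_compl_pair {y : V} : y ∈ ({x, v}ᶜ : Set V) ↔ y ≠ x ∧ y ≠ v := by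
  simp only [Set.mem_compl_iff, Set.mem_insert_iff, Set.mem_singleton_iff, not_or]

theorem image_update_id_of_notMem [DecidableEq V] {B : Set V} (hxB : x ∉ B) :
    Function.update id x v '' B = B :=
  (Set.image_congr fun _ hw => Function.update_of_ne (ne_of_mem_of_not_mem hw hxB) v id).trans
    (Set.image_id B)

theorem image_update_id_insert [DecidableEq V] {B : Set V} (hxB : x ∉ B) :
    Function.update id x v '' insert x B = insert v B := by
  rw [Set.image_insert_eq, Function.update_self, image_update_id_of_notMem hxB]

theorem preimage_val_coe_map_subtype {s : Set V} (S : Finset s) :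
    Subtype.val ⁻¹' (S.map (Function.Embedding.subtype _) : Set V) = (S : Set s) := by
  rw [Finset.coe_map, Function.Embedding.coe_subtype,
    Set.preimage_image_eq _ Subtype.val_injective]

theorem subtype_insert_map_subtype [DecidableEq V] {s : Set V} [DecidablePred (· ∈ s)]
    {a : V} (has : a ∉ s) (T : Finset s) :
    (insert a (T.map (Function.Embedding.subtype _))).subtype (· ∈ s) = T := by
  ext y
  simp [Finset.mem_subtype, ne_of_mem_of_not_mem y.2 has]

/-- In `G - x` the neighbour `v` stands in for the leaf `x`: `x` can only force `v`, and only `v`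
can force `x`. -/
theorem zfClosure_induce_compl_singleton [DecidableEq V] (huniq : ∀ w, G.Adj x w → w = v)
    {B : Set V} {w : V} (hw : ZFClosure G B w) (z : ({x}ᶜ : Set V))
    (hz : (z : V) = Function.update id x v w) :
    ZFClosure (G.induce {x}ᶜ) (Subtype.val ⁻¹' (Function.update id x v '' B)) z := by
  induction hw generalizing z with
  | init hw => exact .init (Set.mem_preimage.2 (hz ▸ Set.mem_image_of_mem _ hw))
  | @force u w _ huw _ ihu ihnb =>
    by_cases hux : u = x
    · subst hux
      obtain rfl := huniq w huw
      exact ihu z (by simpa [Function.update_of_ne huw.ne'] using hz)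
    by_cases hwx : w = x
    · subst hwx
      obtain rfl := huniq u huw.symm
      exact ihu z (by simpa [Function.update_of_ne hux] using hz)
    rw [Function.update_of_ne hwx, id] at hz
    refine .force (w := z) (ihu ⟨u, hux⟩ (by simp [Function.update_of_ne hux]))
      (by simpa [hz] using huw) fun y hy hyz => ?_
    refine ihnb y (by simpa using hy) (fun e => hyz (Subtype.ext (e.trans hz.symm))) y ?_
    simp [Function.update_of_ne y.2]

/-- From `B ∪ {v}`, the vertex `v` can force nothing but `x`, and it forces `x` only once all its
other neighbours are blue; the second disjunct of `hz` records this. -/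
theorem zfClosure_induce_compl_pair (hadj : G.Adj x v) (huniq : ∀ w, G.Adj x w → w = v)
    {B : Set V} (hxB : x ∉ B) {w : V} (hw : ZFClosure G (insert v B) w) (z : ({x, v}ᶜ : Set V))
    (hz : (z : V) = w ∨ (w = x ∧ G.Adj v z)) :
    ZFClosure (G.induce {x, v}ᶜ) (Subtype.val ⁻¹' B) z := by
  obtain ⟨zx, zv⟩ : (z : V) ≠ x ∧ (z : V) ≠ v := mem_compl_pair.1 z.2
  induction hw generalizing z with
  | @init w hw =>
    rcases hz with rfl | ⟨rfl, -⟩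
    · exact .init ((Set.mem_insert_iff.1 hw).resolve_left zv)
    · exact absurd ((Set.mem_insert_iff.1 hw).resolve_left hadj.ne) hxB
  | @force u w _ huw _ ihu ihnb =>
    rcases hz with rfl | ⟨rfl, hvz⟩
    · by_cases hux : u = x
      · exact absurd (huniq _ (hux ▸ huw)) zv
      by_cases huv : u = v
      · subst huv
        exact ihnb x hadj.symm (Ne.symm zx) z (Or.inr ⟨rfl, huw⟩) zx zv
      refine .force (ihu ⟨u, by simp [hux, huv]⟩ (Or.inl rfl) hux huv) (by simpa using huw)
        fun y hy hyz => ?_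
      obtain ⟨yx, yv⟩ := mem_compl_pair.1 y.2
      exact ihnb y (by simpa using hy) (fun e => hyz (Subtype.ext e)) y (Or.inl rfl) yx yv
    · obtain rfl := huniq u huw.symm
      exact ihnb z hvz zx z (Or.inl rfl) zx zv

theorem IsZeroForcing.induce_compl_singleton [DecidableEq V] (huniq : ∀ w, G.Adj x w → w = v)
    {B : Set V} (hB : IsZeroForcing G B) :
    IsZeroForcing (G.induce {x}ᶜ) (Subtype.val ⁻¹' (Function.update id x v '' B)) :=
  fun z => zfClosure_induce_compl_singleton huniq (hB z) z (by simp [Function.update_of_ne z.2])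

theorem IsZeroForcing.induce_compl_pair (hadj : G.Adj x v) (huniq : ∀ w, G.Adj x w → w = v)
    {B : Set V} (hxB : x ∉ B) (hB : IsZeroForcing G (insert v B)) :
    IsZeroForcing (G.induce {x, v}ᶜ) (Subtype.val ⁻¹' B) :=
  fun z => zfClosure_induce_compl_pair hadj huniq hxB (hB z) z (Or.inl rfl)

theorem nfCount_induce_compl_add_le [Fintype V] [DecidableEq V] (hadj : G.Adj x v)
    (huniq : ∀ w, G.Adj x w → w = v) (k : ℕ) :
    nfCount (G.induce {x}ᶜ) (k + 1) + nfCount (G.induce {x, v}ᶜ) k ≤ nfCount G (k + 1) := by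
  classical
  set ι₁ := Function.Embedding.subtype (· ∈ ({x}ᶜ : Set V))
  set ι₂ := Function.Embedding.subtype (· ∈ ({x, v}ᶜ : Set V))
  have hx₁ (S : Finset ({x}ᶜ : Set V)) : x ∉ S.map ι₁ := by simp [ι₁]
  have hx₂ (T : Finset ({x, v}ᶜ : Set V)) : x ∉ T.map ι₂ := by simp [ι₂]
  have hv₂ (T : Finset ({x, v}ᶜ : Set V)) : v ∉ T.map ι₂ := by simp [ι₂]
  let f (S : {S : Finset ({x}ᶜ : Set V) // S.card = k + 1 ∧
      ¬ IsZeroForcing (G.induce {x}ᶜ) ↑S}) :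
      {S : Finset V // S.card = k + 1 ∧ ¬ IsZeroForcing G ↑S} :=
    ⟨S.1.map ι₁, by rw [Finset.card_map, S.2.1], fun h => S.2.2 (by
      have := h.induce_compl_singleton huniq
      rwa [image_update_id_of_notMem (hx₁ S.1), preimage_val_coe_map_subtype] at this)⟩
  let g (T : {T : Finset ({x, v}ᶜ : Set V) // T.card = k ∧
      ¬ IsZeroForcing (G.induce {x, v}ᶜ) ↑T}) :
      {S : Finset V // S.card = k + 1 ∧ ¬ IsZeroForcing G ↑S} :=
    if h : IsZeroForcing G ↑(insert x (T.1.map ι₂)) then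
      ⟨insert v (T.1.map ι₂),
        by rw [Finset.card_insert_of_notMem (hv₂ _), Finset.card_map, T.2.1],
        fun h' => T.2.2 (by
          rw [Finset.coe_insert] at h'
          have := h'.induce_compl_pair hadj huniq (hx₂ T.1)
          rwa [preimage_val_coe_map_subtype] at this)⟩
    else
      ⟨insert x (T.1.map ι₂),
        by rw [Finset.card_insert_of_notMem (hx₂ _), Finset.card_map, T.2.1],
        h⟩
  have hf : Function.Injective f := fun S S' h =>
    Subtype.ext (Finset.map_injective ι₁ (congrArg Subtype.val h))
  have hg : Function.Injective g := by
    have hT (T) : (g T).1.subtype (· ∈ ({x, v}ᶜ : Set V)) = T.1 := by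
      unfold g
      split_ifs <;> exact subtype_insert_map_subtype (by simp) T.1
    exact fun T T' h => Subtype.ext (by rw [← hT T, ← hT T', h])
  have hfg (S T) : f S ≠ g T := by
    intro h
    unfold g at h
    split_ifs at h with hz
    · have hS : S.1.map ι₁ = insert v (T.1.map ι₂) := congrArg Subtype.val h
      rw [Finset.coe_insert] at hz
      have := hz.induce_compl_singleton huniq
      rw [image_update_id_insert (hx₂ T.1), ← Finset.coe_insert, ← hS,
        preimage_val_coe_map_subtype] at this
      exact S.2.2 this
    · have hS : S.1.map ι₁ = insert x (T.1.map ι₂) := congrArg Subtype.val h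
      exact hx₁ S.1 (hS ▸ Finset.mem_insert_self x _)
  rw [nfCount, nfCount, nfCount, ← Nat.card_sum]
  exact Nat.card_le_card_of_injective _ (hf.sumElim hg hfg)

end Leaf

/-- If `G` (on `n ≥ 3` vertices) has a leaf `x` with unique neighbor `v`, and both
`G - x` and `G - {x,v}` are path-extremal, then `G` is path-extremal. -/
theorem stmt_17 {V : Type*} [Fintype V] [DecidableEq V] (G : SimpleGraph V)
    (hn : 3 ≤ Fintype.card V) (x v : V)
    (hadj : G.Adj x v) (huniq : ∀ w, G.Adj x w → w = v)
    (h1 : PathExtremal (G.induce ((Finset.univ.erase x : Finset V) : Set V)))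
    (h2 : PathExtremal (G.induce (((Finset.univ.erase x).erase v : Finset V) : Set V))) :
    PathExtremal G := by
  obtain ⟨m, hm⟩ : ∃ m, Fintype.card V = m + 3 := ⟨_, (Nat.sub_add_cancel hn).symm⟩
  have hs₁ : ((Finset.univ.erase x : Finset V) : Set V) = {x}ᶜ := by ext; simp
  have hs₂ : (((Finset.univ.erase x).erase v : Finset V) : Set V) = {x, v}ᶜ := by ext; simp
  have hc₁ : Fintype.card ((Finset.univ.erase x : Finset V) : Set V) = m + 2 := by simp [hm]
  have hc₂ : Fintype.card (((Finset.univ.erase x).erase v : Finset V) : Set V) = m + 1 := by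
    simp [hadj.ne', hm]
  have e₁ := hc₁ ▸ (pathExtremal_iff_nfCount_le _).1 h1
  have e₂ := hc₂ ▸ (pathExtremal_iff_nfCount_le _).1 h2
  refine (pathExtremal_iff_nfCount_le G).2 fun k => ?_
  rw [hm]
  have : Nonempty V := ⟨x⟩
  cases k with
  | zero => rw [nfCount_zero, nfCount_zero]
  | succ k =>
    calc nfCount (pathGraph (m + 3)) (k + 1)
        ≤ nfCount (pathGraph (m + 2)) (k + 1) + nfCount (pathGraph (m + 1)) k :=
          nfCount_pathGraph_add_two_le m.succ_pos k
      _ ≤ nfCount (G.induce {x}ᶜ) (k + 1) + nfCount (G.induce {x, v}ᶜ) k := by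
          rw [← nfCount_induce_congr hs₁, ← nfCount_induce_congr hs₂]
          exact add_le_add (e₁ _) (e₂ _)
      _ ≤ nfCount G (k + 1) := nfCount_induce_compl_add_le hadj huniq k
end
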